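/- (Descent and rank feasibility of the rank-constrained iteration, Gaussian case) Let Y ∈ ℝ^{n×m}, X ∈ ℝ^{n×p} with ρ = ‖X‖₂² ≤ 1, let 1 ≤ r ≤ min(p,m) and η ≥ 0. Starting from any B⁽⁰⁾ ∈ ℝ^{p×m}, define iteratively B⁽ʲ⁺¹⁾ = Θ^{#σ}( B⁽ʲ⁾ + XᵀY − XᵀXB⁽ʲ⁾ ; r, η ). Then for F(B) = ‖Y−XB‖_F²/2 + (η/2)‖B‖_F², the sequence F(B⁽ʲ⁾) is nonincreasing with F(B⁽ʲ⁾) − F(B⁽ʲ⁺¹⁾) ≥ (1−ρ)‖B⁽ʲ⁾ − B⁽ʲ⁺¹⁾‖_F²/2 for all j ≥ 1, and rank(B⁽ʲ⁾) ≤ r for all j ≥ 1. -/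

import Mathlib

/-!
For `A` with singular value decomposition `U diag(s) Vᵀ`, the matrix
`T = U diag(Θ^{#}(s; r, η)) Vᵀ` minimises `‖C - A‖_F² + η‖C‖_F²` over all `C = P C` with `P` an
orthogonal projection of rank at most `r`: expanding the square, everything reduces to bounding
`2⟨C, A⟩ = 2⟨C, P A⟩ ≤ (1 + η)‖C‖_F² + ‖P A‖_F² / (1 + η)`, and Ky Fan's inequality bounds
`‖P A‖_F²` by the sum of the `r` largest `sᵢ²`, which is exactly what `T` attains.

Each iterate after the first is such a `C` (it is itself thresholded), and the step is the minimiser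
for `A = B + Xᵀ(Y - XB)`. Comparing the new iterate with the old one in this surrogate and using
`‖XΔ‖_F² ≤ ρ‖Δ‖_F²` gives the descent inequality; the rank bound is read off the thresholded
diagonal.
-/

open Matrix

/-- Squared Frobenius norm of a real matrix. -/
def frobSq {n m : ℕ} (A : Matrix (Fin n) (Fin m) ℝ) : ℝ := ∑ i, ∑ j, A i j ^ 2

/-- `(U, σ, V)` is a (reduced) singular value decomposition of the real `n × m` matrix `B`. -/
def IsSVD {n m k : ℕ} (B : Matrix (Fin n) (Fin m) ℝ) (U : Matrix (Fin n) (Fin k) ℝ)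
    (σ : Fin k → ℝ) (V : Matrix (Fin m) (Fin k) ℝ) : Prop :=
  Uᵀ * U = 1 ∧ Vᵀ * V = 1 ∧ Antitone σ ∧ (∀ i, 0 ≤ σ i) ∧ B = U * diagonal σ * Vᵀ

/-- The squared spectral norm `‖X‖₂²` of a real matrix. -/
noncomputable def spectralNormSq {n p : ℕ} (X : Matrix (Fin n) (Fin p) ℝ) : ℝ :=
  ‖LinearMap.toContinuousLinearMap (Matrix.toEuclideanLin X)‖ ^ 2

noncomputable def frobInner {n m : ℕ} (A B : Matrix (Fin n) (Fin m) ℝ) : ℝ := (Aᵀ * B).trace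

section Frobenius

variable {n m p : ℕ}

theorem frobInner_eq_sum (A B : Matrix (Fin n) (Fin m) ℝ) :
    frobInner A B = ∑ i, ∑ j, A i j * B i j := by
  simp only [frobInner, trace, diag_apply, mul_apply, transpose_apply]
  exact Finset.sum_comm

theorem frobSq_eq_frobInner (A : Matrix (Fin n) (Fin m) ℝ) : frobSq A = frobInner A A := by
  simp only [frobSq, frobInner_eq_sum, sq]

theorem frobInner_comm (A B : Matrix (Fin n) (Fin m) ℝ) : frobInner A B = frobInner B A := by
  simp only [frobInner_eq_sum, mul_comm]

theorem frobInner_mul_left (X : Matrix (Fin n) (Fin p) ℝ) (D : Matrix (Fin p) (Fin m) ℝ)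
    (E : Matrix (Fin n) (Fin m) ℝ) : frobInner (X * D) E = frobInner D (Xᵀ * E) := by
  simp only [frobInner, transpose_mul, Matrix.mul_assoc]

theorem frobInner_smul_left (c : ℝ) (A B : Matrix (Fin n) (Fin m) ℝ) :
    frobInner (c • A) B = c * frobInner A B := by
  simp only [frobInner, transpose_smul, Matrix.smul_mul, trace_smul, smul_eq_mul]

theorem frobSq_nonneg (A : Matrix (Fin n) (Fin m) ℝ) : 0 ≤ frobSq A := by
  unfold frobSq; positivity

theorem frobSq_smul (c : ℝ) (A : Matrix (Fin n) (Fin m) ℝ) :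
    frobSq (c • A) = c ^ 2 * frobSq A := by
  simp only [frobSq, Matrix.smul_apply, smul_eq_mul, mul_pow, Finset.mul_sum]

theorem frobSq_neg (A : Matrix (Fin n) (Fin m) ℝ) : frobSq (-A) = frobSq A := by
  simp only [frobSq, Matrix.neg_apply, neg_sq]

theorem frobSq_sub (A B : Matrix (Fin n) (Fin m) ℝ) :
    frobSq (A - B) = frobSq A - 2 * frobInner A B + frobSq B := by
  have h : frobInner (A - B) (A - B) = frobInner A A - frobInner A B - frobInner B A
      + frobInner B B := by
    simp only [frobInner, transpose_sub, Matrix.sub_mul, Matrix.mul_sub, trace_sub]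
    ring
  rw [frobSq_eq_frobInner, h, frobInner_comm B A, ← frobSq_eq_frobInner, ← frobSq_eq_frobInner]
  ring

theorem frobSq_transpose (A : Matrix (Fin n) (Fin m) ℝ) : frobSq Aᵀ = frobSq A := by
  simp only [frobSq, transpose_apply]
  exact Finset.sum_comm

theorem frobSq_mul_of_orthonormal {W : Matrix (Fin p) (Fin n) ℝ} (hW : Wᵀ * W = 1)
    (N : Matrix (Fin n) (Fin m) ℝ) : frobSq (W * N) = frobSq N := by
  rw [frobSq_eq_frobInner, frobInner_mul_left, ← Matrix.mul_assoc, hW, Matrix.one_mul,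
    frobSq_eq_frobInner]

theorem frobSq_mul_transpose_of_orthonormal {V : Matrix (Fin m) (Fin p) ℝ} (hV : Vᵀ * V = 1)
    (N : Matrix (Fin n) (Fin p) ℝ) : frobSq (N * Vᵀ) = frobSq N := by
  rw [← frobSq_transpose, transpose_mul, transpose_transpose, frobSq_mul_of_orthonormal hV,
    frobSq_transpose]

theorem frobSq_diagonal (d : Fin n → ℝ) : frobSq (diagonal d) = ∑ i, d i ^ 2 := by
  simp [frobSq, diagonal_apply]

theorem frobSq_mul_diagonal_mul_transpose {k : ℕ} {U : Matrix (Fin p) (Fin k) ℝ}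
    {V : Matrix (Fin m) (Fin k) ℝ} (hU : Uᵀ * U = 1) (hV : Vᵀ * V = 1) (d : Fin k → ℝ) :
    frobSq (U * diagonal d * Vᵀ) = ∑ i, d i ^ 2 := by
  rw [frobSq_mul_transpose_of_orthonormal hV, frobSq_mul_of_orthonormal hU, frobSq_diagonal]

theorem two_mul_frobInner_le {c : ℝ} (hc : 0 < c) (A B : Matrix (Fin n) (Fin m) ℝ) :
    2 * frobInner A B ≤ c * frobSq A + frobSq B / c := by
  have h := frobSq_nonneg (c • A - B)
  rw [frobSq_sub, frobSq_smul, frobInner_smul_left] at h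
  rw [← sub_nonneg]
  have : c * frobSq A + frobSq B / c - 2 * frobInner A B
      = (c ^ 2 * frobSq A - 2 * (c * frobInner A B) + frobSq B) / c := by
    field_simp
    ring
  rw [this]
  positivity

end Frobenius

theorem frobSq_mul_le_spectralNormSq {n p m : ℕ} (X : Matrix (Fin n) (Fin p) ℝ)
    (D : Matrix (Fin p) (Fin m) ℝ) : frobSq (X * D) ≤ spectralNormSq X * frobSq D := by
  set T := LinearMap.toContinuousLinearMap (toEuclideanLin X)
  have hcol : ∀ j, ∑ i, (X * D) i j ^ 2 ≤ ‖T‖ ^ 2 * ∑ i, D i j ^ 2 := by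
    intro j
    set v : EuclideanSpace ℝ (Fin p) := WithLp.toLp 2 (fun i => D i j)
    have hTv : T v = WithLp.toLp 2 (fun i => (X * D) i j) := by
      ext i
      simp [T, v, toEuclideanLin, mulVec, dotProduct, mul_apply]
    calc ∑ i, (X * D) i j ^ 2 = ‖T v‖ ^ 2 := by rw [hTv, EuclideanSpace.real_norm_sq_eq]
      _ ≤ (‖T‖ * ‖v‖) ^ 2 := by gcongr; exact T.le_opNorm v
      _ = ‖T‖ ^ 2 * ∑ i, D i j ^ 2 := by rw [mul_pow, EuclideanSpace.real_norm_sq_eq]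
  rw [← frobSq_transpose, ← frobSq_transpose D, spectralNormSq, frobSq, frobSq, Finset.mul_sum]
  exact Finset.sum_le_sum fun j _ => hcol j

theorem dotProduct_transpose_mulVec_le {p k : ℕ} {U : Matrix (Fin p) (Fin k) ℝ}
    (hU : Uᵀ * U = 1) (x : Fin p → ℝ) : (Uᵀ *ᵥ x) ⬝ᵥ (Uᵀ *ᵥ x) ≤ x ⬝ᵥ x := by
  set v := Uᵀ *ᵥ x
  have hx : x ⬝ᵥ (U *ᵥ v) = v ⬝ᵥ v := by
    rw [dotProduct_mulVec, ← mulVec_transpose]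
  have hUv : (U *ᵥ v) ⬝ᵥ (U *ᵥ v) = v ⬝ᵥ v := by
    rw [dotProduct_mulVec, ← mulVec_transpose, mulVec_mulVec, hU, one_mulVec]
  have hres : (x - U *ᵥ v) ⬝ᵥ (x - U *ᵥ v) = x ⬝ᵥ x - v ⬝ᵥ v := by
    rw [sub_dotProduct, dotProduct_sub, dotProduct_sub, hx, hUv, dotProduct_comm (U *ᵥ v), hx]
    ring
  have := hres ▸ dotProduct_self_star_nonneg (x - U *ᵥ v)
  linarith

theorem sum_sq_transpose_mul_apply_le {p k k' : ℕ} {W : Matrix (Fin p) (Fin k') ℝ}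
    {U : Matrix (Fin p) (Fin k) ℝ} (hW : Wᵀ * W = 1) (hU : Uᵀ * U = 1) (i : Fin k) :
    ∑ l, (Wᵀ * U) l i ^ 2 ≤ 1 := by
  have hcol : (fun a => U a i) ⬝ᵥ (fun a => U a i) = 1 := by
    simpa [mul_apply, dotProduct] using congr_fun (congr_fun hU i) i
  calc ∑ l, (Wᵀ * U) l i ^ 2 = (Wᵀ *ᵥ fun a => U a i) ⬝ᵥ (Wᵀ *ᵥ fun a => U a i) := by
        simp only [dotProduct, sq, mul_apply, mulVec, transpose_apply]
    _ ≤ 1 := hcol ▸ dotProduct_transpose_mulVec_le hW _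

noncomputable def topMask {k : ℕ} (r : ℕ) : Fin k → ℝ := fun i => if (i : ℕ) < r then 1 else 0

theorem topMask_nonneg {k r : ℕ} (i : Fin k) : 0 ≤ topMask r i := by
  unfold topMask; split_ifs <;> norm_num

theorem topMask_le_one {k r : ℕ} (i : Fin k) : topMask r i ≤ 1 := by
  unfold topMask; split_ifs <;> norm_num

theorem topMask_mul_self {k r : ℕ} (i : Fin k) : topMask r i * topMask r i = topMask r i := by
  unfold topMask; split_ifs <;> norm_num

theorem sum_topMask {k : ℕ} (r : ℕ) : ∑ i : Fin k, topMask r i = min k r := by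
  simp [topMask, Finset.sum_boole, Fin.card_filter_val_lt]

theorem sum_mul_le_sum_topMask_mul {k r : ℕ} {t g : Fin k → ℝ} (ht : Antitone t)
    (ht0 : ∀ i, 0 ≤ t i) (hg0 : ∀ i, 0 ≤ g i) (hg1 : ∀ i, g i ≤ 1) (hg : ∑ i, g i ≤ r) :
    ∑ i, t i * g i ≤ ∑ i, topMask r i * t i := by
  by_cases hrk : r < k
  · set τ := t ⟨r, hrk⟩
    have hterm : ∀ i, t i * g i - topMask r i * t i ≤ τ * g i - topMask r i * τ := by
      intro i
      by_cases hi : (i : ℕ) < r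
      · have : τ ≤ t i := ht (Fin.mk_le_of_le_val hi.le)
        simp only [topMask, if_pos hi]
        nlinarith [hg1 i]
      · have : t i ≤ τ := ht (Fin.le_def.mpr (not_lt.mp hi))
        simp only [topMask, if_neg hi]
        nlinarith [hg0 i]
    have hτ : ∑ i, τ * g i - ∑ i : Fin k, topMask r i * τ ≤ 0 := by
      rw [← Finset.mul_sum, ← Finset.sum_mul, sum_topMask, min_eq_right hrk.le]
      nlinarith [ht0 ⟨r, hrk⟩]
    have := Finset.sum_le_sum fun i (_ : i ∈ Finset.univ) => hterm i
    simp only [Finset.sum_sub_distrib] at this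
    linarith
  · refine Finset.sum_le_sum fun i _ => ?_
    simp only [topMask, if_pos (show (i : ℕ) < r by omega), one_mul]
    exact mul_le_of_le_one_right (ht0 i) (hg1 i)


noncomputable def topProjection {p k : ℕ} (W : Matrix (Fin p) (Fin k) ℝ) (r : ℕ) :
    Matrix (Fin p) (Fin p) ℝ :=
  W * diagonal (topMask r : Fin k → ℝ) * Wᵀ

theorem topProjection_transpose {p k : ℕ} (W : Matrix (Fin p) (Fin k) ℝ) (r : ℕ) :
    (topProjection W r)ᵀ = topProjection W r := by
  simp only [topProjection, transpose_mul, transpose_transpose, diagonal_transpose,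
    Matrix.mul_assoc]

theorem topProjection_mul_of_eq_zero {p m k r : ℕ} {W : Matrix (Fin p) (Fin k) ℝ}
    (hW : Wᵀ * W = 1) {γ : Fin k → ℝ} (hγ : ∀ i : Fin k, r ≤ i → γ i = 0)
    (Z : Matrix (Fin k) (Fin m) ℝ) :
    topProjection W r * (W * diagonal γ * Z) = W * diagonal γ * Z := by
  have hmask : ∀ i, topMask r i * γ i = γ i := fun i => by
    unfold topMask
    split_ifs with hi
    · simp
    · simp [hγ i (not_lt.mp hi)]
  simp only [topProjection, Matrix.mul_assoc]
  rw [← Matrix.mul_assoc Wᵀ W, hW, Matrix.one_mul, ← Matrix.mul_assoc (diagonal _),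
    diagonal_mul_diagonal]
  simp only [hmask]

/-- Ky Fan's inequality for a projection of rank at most `r`. -/
theorem IsSVD.frobSq_topProjection_mul_le {p m k k' : ℕ} (r : ℕ) {A : Matrix (Fin p) (Fin m) ℝ}
    {U : Matrix (Fin p) (Fin k) ℝ} {s : Fin k → ℝ} {V : Matrix (Fin m) (Fin k) ℝ}
    (hA : IsSVD A U s V) {W : Matrix (Fin p) (Fin k') ℝ} (hW : Wᵀ * W = 1) :
    frobSq (topProjection W r * A) ≤ ∑ i, topMask r i * s i ^ 2 := by
  obtain ⟨hU, hV, hs, hs0, rfl⟩ := hA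
  set M := Wᵀ * U
  -- `g i = ‖P uᵢ‖²`; Bessel's inequality for the columns of `W` and of `U` puts these weights
  -- in `[0, 1]` with total at most `r`.
  set g : Fin k → ℝ := fun i => ∑ l, topMask r l * M l i ^ 2
  have hPA : topProjection W r * (U * diagonal s * Vᵀ)
      = W * (diagonal (topMask r : Fin k' → ℝ) * M * diagonal s) * Vᵀ := by
    simp only [topProjection, M, Matrix.mul_assoc]
  have hg : frobSq (diagonal (topMask r : Fin k' → ℝ) * M * diagonal s)
      = ∑ i, s i ^ 2 * g i := by
    simp only [frobSq, diagonal_mul, mul_diagonal, g, Finset.mul_sum, mul_pow]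
    rw [Finset.sum_comm]
    refine Finset.sum_congr rfl fun i _ => Finset.sum_congr rfl fun l _ => ?_
    linear_combination (M l i * s i) ^ 2 * topMask_mul_self (r := r) l
  have hg1 : ∀ i, g i ≤ 1 := fun i =>
    (Finset.sum_le_sum fun l _ => mul_le_of_le_one_left (sq_nonneg _) (topMask_le_one l)).trans
      (sum_sq_transpose_mul_apply_le hW hU i)
  have hrow : ∀ l, ∑ i, M l i ^ 2 ≤ 1 := fun l => by
    have hM : ∀ i, M l i = (Uᵀ * W) i l := fun i => by
      simp only [M, mul_apply, transpose_apply, mul_comm]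
    simpa only [hM] using sum_sq_transpose_mul_apply_le hU hW l
  have hgsum : ∑ i, g i ≤ r := by
    calc ∑ i, g i = ∑ l, topMask r l * ∑ i, M l i ^ 2 := by
          simp only [g, Finset.mul_sum]; exact Finset.sum_comm
      _ ≤ ∑ l, topMask r l := Finset.sum_le_sum fun l _ =>
          mul_le_of_le_one_right (topMask_nonneg l) (hrow l)
      _ ≤ r := by rw [sum_topMask]; exact_mod_cast min_le_right k' r
  rw [hPA, frobSq_mul_transpose_of_orthonormal hV, frobSq_mul_of_orthonormal hW, hg]
  exact sum_mul_le_sum_topMask_mul (fun i j hij => pow_le_pow_left₀ (hs0 j) (hs hij) 2)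
    (fun i => sq_nonneg _)
    (fun i => Finset.sum_nonneg fun l _ => mul_nonneg (topMask_nonneg l) (sq_nonneg _)) hg1 hgsum

/-- The paper's `Θ^{#}(s; r, η)`, valid for `s` sorted in decreasing order (as the singular
values in `IsSVD` are). -/
noncomputable def quantileThreshold {k : ℕ} (r : ℕ) (η : ℝ) (s : Fin k → ℝ) : Fin k → ℝ :=
  fun i => if (i : ℕ) < r then s i / (1 + η) else 0

theorem quantileThreshold_eq_zero {k r : ℕ} {η : ℝ} {s : Fin k → ℝ} {i : Fin k} (hi : r ≤ i) :
    quantileThreshold r η s i = 0 := by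
  simp [quantileThreshold, hi]

noncomputable def penalizedSqDist {p m : ℕ} (A : Matrix (Fin p) (Fin m) ℝ) (η : ℝ)
    (C : Matrix (Fin p) (Fin m) ℝ) : ℝ :=
  frobSq (C - A) + η * frobSq C

theorem penalizedSqDist_quantileThreshold {p m k r : ℕ} {η : ℝ} (hη : 1 + η ≠ 0)
    {U : Matrix (Fin p) (Fin k) ℝ} {V : Matrix (Fin m) (Fin k) ℝ} (hU : Uᵀ * U = 1)
    (hV : Vᵀ * V = 1) (s : Fin k → ℝ) :
    penalizedSqDist (U * diagonal s * Vᵀ) η (U * diagonal (quantileThreshold r η s) * Vᵀ)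
      = ∑ i, s i ^ 2 - (∑ i, topMask r i * s i ^ 2) / (1 + η) := by
  rw [penalizedSqDist, ← Matrix.sub_mul, ← Matrix.mul_sub, diagonal_sub,
    frobSq_mul_diagonal_mul_transpose hU hV, frobSq_mul_diagonal_mul_transpose hU hV,
    Finset.mul_sum, ← Finset.sum_add_distrib, Finset.sum_div, ← Finset.sum_sub_distrib]
  refine Finset.sum_congr rfl fun i _ => ?_
  unfold quantileThreshold topMask
  split_ifs
  · field_simp
    ring
  · simp

theorem IsSVD.penalizedSqDist_quantileThreshold_le {p m k k' r : ℕ} {η : ℝ} (hη : 0 ≤ η)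
    {A : Matrix (Fin p) (Fin m) ℝ} {U : Matrix (Fin p) (Fin k) ℝ} {s : Fin k → ℝ}
    {V : Matrix (Fin m) (Fin k) ℝ} (hA : IsSVD A U s V) {W : Matrix (Fin p) (Fin k') ℝ}
    (hW : Wᵀ * W = 1) {γ : Fin k' → ℝ} (hγ : ∀ i : Fin k', r ≤ i → γ i = 0)
    (Z : Matrix (Fin m) (Fin k') ℝ) :
    penalizedSqDist A η (U * diagonal (quantileThreshold r η s) * Vᵀ)
      ≤ penalizedSqDist A η (W * diagonal γ * Zᵀ) := by
  have hproj := hA.frobSq_topProjection_mul_le r hW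
  obtain ⟨hU, hV, -, -, rfl⟩ := hA
  have h1η : 0 < 1 + η := by linarith
  set A := U * diagonal s * Vᵀ
  set C := W * diagonal γ * Zᵀ
  have hPC : topProjection W r * C = C := topProjection_mul_of_eq_zero hW hγ Zᵀ
  have hCA : frobInner C A = frobInner C (topProjection W r * A) := by
    conv_lhs => rw [← hPC]
    rw [frobInner_mul_left, topProjection_transpose]
  have hAM := two_mul_frobInner_le h1η C (topProjection W r * A)
  have hdiv := div_le_div_of_nonneg_right hproj h1η.le
  rw [penalizedSqDist_quantileThreshold h1η.ne' hU hV, penalizedSqDist, frobSq_sub C,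
    frobSq_mul_diagonal_mul_transpose hU hV]
  linarith

noncomputable def ridgeObjective {n p m : ℕ} (Y : Matrix (Fin n) (Fin m) ℝ)
    (X : Matrix (Fin n) (Fin p) ℝ) (η : ℝ) (B : Matrix (Fin p) (Fin m) ℝ) : ℝ :=
  frobSq (Y - X * B) / 2 + η / 2 * frobSq B

/-- The majorize–minimize step: `b'` beats `b` on the surrogate built at `b`. -/
theorem le_ridgeObjective_sub_of_penalizedSqDist_le {n p m : ℕ} (Y : Matrix (Fin n) (Fin m) ℝ)
    {X : Matrix (Fin n) (Fin p) ℝ} {ρ η : ℝ}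
    (hX : ∀ D : Matrix (Fin p) (Fin m) ℝ, frobSq (X * D) ≤ ρ * frobSq D)
    {b b' : Matrix (Fin p) (Fin m) ℝ}
    (hb' : penalizedSqDist (b + Xᵀ * Y - Xᵀ * X * b) η b'
      ≤ penalizedSqDist (b + Xᵀ * Y - Xᵀ * X * b) η b) :
    (1 - ρ) * frobSq (b - b') / 2 ≤ ridgeObjective Y X η b - ridgeObjective Y X η b' := by
  set D := Xᵀ * (Y - X * b)
  set Δ := b' - b
  have hb'D : b' - (b + Xᵀ * Y - Xᵀ * X * b) = Δ - D := by
    simp only [Δ, D, Matrix.mul_sub, Matrix.mul_assoc]; abel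
  have hbD : b - (b + Xᵀ * Y - Xᵀ * X * b) = -D := by
    simp only [D, Matrix.mul_sub, Matrix.mul_assoc]; abel
  have hres : Y - X * b' = (Y - X * b) - X * Δ := by
    simp only [Δ, Matrix.mul_sub]; abel
  have hinner : frobInner (Y - X * b) (X * Δ) = frobInner Δ D := by
    rw [frobInner_comm, frobInner_mul_left]
  rw [penalizedSqDist, penalizedSqDist, hb'D, hbD, frobSq_neg, frobSq_sub] at hb'
  rw [ridgeObjective, ridgeObjective, hres, ← neg_sub b' b, frobSq_neg, frobSq_sub (Y - X * b),
    hinner]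
  linarith [hX Δ]

theorem rank_mul_diagonal_mul_le {K : Type*} [Field K] {p m k r : ℕ}
    (U : Matrix (Fin p) (Fin k) K) {d : Fin k → K} (hd : ∀ i : Fin k, r ≤ i → d i = 0)
    (V : Matrix (Fin k) (Fin m) K) : (U * diagonal d * V).rank ≤ r := by
  classical
  calc (U * diagonal d * V).rank ≤ (diagonal d).rank :=
        (rank_mul_le_left _ _).trans (rank_mul_le_right _ _)
    _ = Fintype.card {i // d i ≠ 0} := rank_diagonal d
    _ ≤ Fintype.card {i : Fin k // (i : ℕ) < r} :=
        Fintype.card_subtype_mono _ _ fun i hi => not_le.mp fun h => hi (hd i h)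
    _ ≤ r := by simp [Fintype.card_subtype, Fin.card_filter_val_lt]

theorem descent_rank_constrained_iteration_general {n p m : ℕ}
    (Y : Matrix (Fin n) (Fin m) ℝ) (X : Matrix (Fin n) (Fin p) ℝ)
    (ρ : ℝ) (hρdef : ρ = spectralNormSq X)
    (r : ℕ) (η : ℝ) (hη : 0 ≤ η)
    (B : ℕ → Matrix (Fin p) (Fin m) ℝ)
    (U : ℕ → Matrix (Fin p) (Fin (min p m)) ℝ)
    (σ : ℕ → Fin (min p m) → ℝ)
    (V : ℕ → Matrix (Fin m) (Fin (min p m)) ℝ)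
    (hSVD : ∀ j : ℕ, IsSVD (B j + Xᵀ * Y - Xᵀ * X * B j) (U j) (σ j) (V j))
    (hiter : ∀ j : ℕ, B (j + 1)
      = U j * diagonal (fun i : Fin (min p m) => if (i : ℕ) < r then σ j i / (1 + η) else 0)
        * (V j)ᵀ) :
    (∀ j : ℕ,
      (frobSq (Y - X * B (j + 1)) / 2 + η / 2 * frobSq (B (j + 1)))
          - (frobSq (Y - X * B (j + 2)) / 2 + η / 2 * frobSq (B (j + 2)))
        ≥ (1 - ρ) * frobSq (B (j + 1) - B (j + 2)) / 2) ∧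
    (∀ j : ℕ, 1 ≤ j → (B j).rank ≤ r) := by
  have hB : ∀ j, B (j + 1) = U j * diagonal (quantileThreshold r η (σ j)) * (V j)ᵀ := hiter
  refine ⟨fun j => le_ridgeObjective_sub_of_penalizedSqDist_le Y
    (hρdef ▸ frobSq_mul_le_spectralNormSq X) ?_, ?_⟩
  · have hopt := (hSVD (j + 1)).penalizedSqDist_quantileThreshold_le (r := r) hη (hSVD j).1
      (γ := quantileThreshold r η (σ j)) (fun _ => quantileThreshold_eq_zero) (V j)
    rwa [← hB (j + 1), ← hB j] at hopt
  · rintro (_ | j) hj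
    · omega
    · rw [hB j]
      exact rank_mul_diagonal_mul_le _ (fun _ => quantileThreshold_eq_zero) _

/-- Descent and rank feasibility of the rank-constrained iteration (Gaussian case):
with `ρ = ‖X‖₂² ≤ 1`, `1 ≤ r ≤ min(p,m)`, `η ≥ 0`, and iterates
`B⁽ʲ⁺¹⁾ = Θ^{#σ}(B⁽ʲ⁾ + XᵀY − XᵀXB⁽ʲ⁾; r, η)` (the quantile thresholding keeps the `r`
largest singular values of the argument, given via an SVD `(U j, σ j, V j)` at each step,
shrunk by `1+η`), the objective `F(B) = ‖Y−XB‖_F²/2 + (η/2)‖B‖_F²` is nonincreasing with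
`F(B⁽ʲ⁾) − F(B⁽ʲ⁺¹⁾) ≥ (1−ρ)‖B⁽ʲ⁾ − B⁽ʲ⁺¹⁾‖_F²/2` for all `j ≥ 1`, and
`rank(B⁽ʲ⁾) ≤ r` for all `j ≥ 1`. -/
theorem descent_rank_constrained_iteration {n p m : ℕ}
    (Y : Matrix (Fin n) (Fin m) ℝ) (X : Matrix (Fin n) (Fin p) ℝ)
    (ρ : ℝ) (hρdef : ρ = spectralNormSq X) (hρ : ρ ≤ 1)
    (r : ℕ) (hr1 : 1 ≤ r) (hr2 : r ≤ min p m) (η : ℝ) (hη : 0 ≤ η)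
    (B : ℕ → Matrix (Fin p) (Fin m) ℝ)
    (U : ℕ → Matrix (Fin p) (Fin (min p m)) ℝ)
    (σ : ℕ → Fin (min p m) → ℝ)
    (V : ℕ → Matrix (Fin m) (Fin (min p m)) ℝ)
    (hSVD : ∀ j : ℕ, IsSVD (B j + Xᵀ * Y - Xᵀ * X * B j) (U j) (σ j) (V j))
    (hiter : ∀ j : ℕ, B (j + 1)
      = U j * diagonal (fun i : Fin (min p m) => if (i : ℕ) < r then σ j i / (1 + η) else 0)
        * (V j)ᵀ) :
    (∀ j : ℕ,
      (frobSq (Y - X * B (j + 1)) / 2 + η / 2 * frobSq (B (j + 1)))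
          - (frobSq (Y - X * B (j + 2)) / 2 + η / 2 * frobSq (B (j + 2)))
        ≥ (1 - ρ) * frobSq (B (j + 1) - B (j + 2)) / 2) ∧
    (∀ j : ℕ, 1 ≤ j → (B j).rank ≤ r) :=
  descent_rank_constrained_iteration_general Y X ρ hρdef r η hη B U σ V hSVD hiter
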